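/- For the extreme-tilt scalar-field system (v = ε ∈ {-1,+1}) given in equations (scalar-field-C), the curve of points Q(Σ₀) = (Σ, A, u, w) = (Σ₀, 0, ε√(1 - C₂Σ₀²), 0), defined for C₂Σ₀² ≤ 1, consists of equilibria, and the Jacobian at Q(Σ₀) has eigenvalue 0 with eigenvector parallel to the tangent vector (1, 0, -εC₂Σ₀/√(1-C₂Σ₀²), 0) of the curve (for C₂Σ₀² < 1, Σ₀ ≠ 0); hence the curve is normally hyperbolic at such points. -/

import Mathlib

/-!
Every point of the curve `Q` is an equilibrium, so `F ∘ Q` vanishes identically near any `Σ₀`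
with `C₂Σ₀² < 1`. Differentiating this identity by the chain rule gives `DF(Q(Σ₀)) Q'(Σ₀) = 0`:
the tangent vector `Q'(Σ₀)`, nonzero since its first coordinate is `1`, lies in the kernel of
the Jacobian.
-/

noncomputable section

/-- Extreme-tilt scalar-field system (v = ε ∈ {±1}) in `(Σ, A, u, w)`, with
parameters `C₂`, `lam` (= λ) and `ε`. -/
def Fets (C₂ lam ε : ℝ) : ℝ × ℝ × ℝ × ℝ → ℝ × ℝ × ℝ × ℝ := fun p =>
  let S := p.1; let A := p.2.1; let u := p.2.2.1; let w := p.2.2.2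
  ((C₂ * S * (2 * C₂ * (S ^ 2 - A ^ 2) - A * (A * lam ^ 2 + 4 * ε) +
      2 * u ^ 2 + 2 * w ^ 2 - 2) -
      2 * A * lam * (A * lam + Real.sqrt 2 * u * ε) + 2 * w ^ 2) / (2 * C₂),
   -(A ^ 3 * lam ^ 2) / 2 + A * C₂ * (S ^ 2 - A ^ 2) +
     A * (2 * S + u ^ 2 + w ^ 2 + 1),
   C₂ * u * (S ^ 2 - A ^ 2) + u * (-(A ^ 2 * lam ^ 2) / 2 + w ^ 2 - 1) +
     Real.sqrt 2 * (A ^ 2 * lam ^ 2 - w ^ 2) / lam + u ^ 3,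
   w * (C₂ * (S ^ 2 - A ^ 2) - A ^ 2 * lam ^ 2 / 2 + S + u ^ 2 -
     Real.sqrt 2 * u / lam + w ^ 2 + 1))

open Filter Topology

section TangentKernel

variable {𝕜 : Type*} [NontriviallyNormedField 𝕜]
  {E : Type*} [NormedAddCommGroup E] [NormedSpace 𝕜 E] {γ : 𝕜 → E} {v : E} {t : 𝕜}

theorem fderiv_apply_tangent_eq_zero {F : Type*} [NormedAddCommGroup F] [NormedSpace 𝕜 F]
    {f : E → F} (hf : DifferentiableAt 𝕜 f (γ t)) (hγ : HasDerivAt γ v t)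
    (hzero : ∀ᶠ s in 𝓝 t, f (γ s) = 0) : fderiv 𝕜 f (γ t) v = 0 :=
  (hf.hasFDerivAt.comp_hasDerivAt t hγ).unique
    ((hasDerivAt_const t (0 : F)).congr_of_eventuallyEq hzero)

theorem hasEigenvector_fderiv_zero_of_tangent {f : E → E} (hf : DifferentiableAt 𝕜 f (γ t))
    (hγ : HasDerivAt γ v t) (hzero : ∀ᶠ s in 𝓝 t, f (γ s) = 0) (hv : v ≠ 0) :
    Module.End.HasEigenvector (fderiv 𝕜 f (γ t)).toLinearMap (0 : 𝕜) v := by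
  refine ⟨Module.End.mem_eigenspace_iff.mpr ?_, hv⟩
  simpa using fderiv_apply_tangent_eq_zero hf hγ hzero

end TangentKernel

section ExtremeTilt

variable {C₂ lam ε : ℝ}

def extremeTiltCurve (C₂ ε S : ℝ) : ℝ × ℝ × ℝ × ℝ :=
  (S, 0, ε * Real.sqrt (1 - C₂ * S ^ 2), 0)

theorem Fets_extremeTiltCurve (hε : ε = 1 ∨ ε = -1) {S : ℝ} (hS : C₂ * S ^ 2 ≤ 1) :
    Fets C₂ lam ε (extremeTiltCurve C₂ ε S) = 0 := by
  have hε2 : ε ^ 2 = 1 := by rcases hε with rfl | rfl <;> norm_num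
  have hu2 : (ε * Real.sqrt (1 - C₂ * S ^ 2)) ^ 2 = 1 - C₂ * S ^ 2 := by
    rw [mul_pow, Real.sq_sqrt (by linarith), hε2, one_mul]
  simp only [Fets, extremeTiltCurve, Prod.mk_eq_zero]
  refine ⟨?_, by ring, ?_, by ring⟩
  · refine div_eq_zero_iff.mpr (Or.inl ?_)
    linear_combination (2 * C₂ * S) * hu2
  · linear_combination (ε * Real.sqrt (1 - C₂ * S ^ 2)) * hu2

theorem eventually_Fets_extremeTiltCurve (hε : ε = 1 ∨ ε = -1) {S₀ : ℝ}
    (hS₀ : C₂ * S₀ ^ 2 < 1) : ∀ᶠ S in 𝓝 S₀, Fets C₂ lam ε (extremeTiltCurve C₂ ε S) = 0 := by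
  have hopen : IsOpen {S : ℝ | C₂ * S ^ 2 < 1} := isOpen_lt (by fun_prop) continuous_const
  filter_upwards [hopen.mem_nhds hS₀] with S hS
  exact Fets_extremeTiltCurve hε (le_of_lt hS)

theorem hasDerivAt_extremeTiltCurve {S₀ : ℝ} (hS₀ : C₂ * S₀ ^ 2 < 1) :
    HasDerivAt (extremeTiltCurve C₂ ε)
      (1, 0, -ε * C₂ * S₀ / Real.sqrt (1 - C₂ * S₀ ^ 2), 0) S₀ := by
  have hpos : 0 < 1 - C₂ * S₀ ^ 2 := by linarith
  have hradicand : HasDerivAt (fun S : ℝ => 1 - C₂ * S ^ 2) (-(C₂ * (2 * S₀))) S₀ := by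
    simpa using ((hasDerivAt_pow 2 S₀).const_mul C₂).const_sub 1
  have hthird : HasDerivAt (fun S : ℝ => ε * Real.sqrt (1 - C₂ * S ^ 2))
      (-ε * C₂ * S₀ / Real.sqrt (1 - C₂ * S₀ ^ 2)) S₀ := by
    refine (((Real.hasDerivAt_sqrt hpos.ne').comp S₀ hradicand).const_mul ε).congr_deriv ?_
    have : Real.sqrt (1 - C₂ * S₀ ^ 2) ≠ 0 := by positivity
    field_simp
  exact (hasDerivAt_id S₀).prodMk ((hasDerivAt_const S₀ 0).prodMk
    (hthird.prodMk (hasDerivAt_const S₀ 0)))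

theorem differentiable_Fets : Differentiable ℝ (Fets C₂ lam ε) := by
  unfold Fets
  fun_prop

end ExtremeTilt

theorem extreme_tilt_curve_normally_hyperbolic_general (C₂ lam ε : ℝ)
    (hε : ε = 1 ∨ ε = -1) :
    (∀ S₀ : ℝ, C₂ * S₀ ^ 2 ≤ 1 →
      Fets C₂ lam ε (S₀, 0, ε * Real.sqrt (1 - C₂ * S₀ ^ 2), 0) = 0) ∧
    (∀ S₀ : ℝ, C₂ * S₀ ^ 2 < 1 → S₀ ≠ 0 →
      Module.End.HasEigenvector
        ((fderiv ℝ (Fets C₂ lam ε)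
            (S₀, 0, ε * Real.sqrt (1 - C₂ * S₀ ^ 2), 0)).toLinearMap) 0
        (1, 0, -ε * C₂ * S₀ / Real.sqrt (1 - C₂ * S₀ ^ 2), 0)) := by
  refine ⟨fun S₀ hS₀ => Fets_extremeTiltCurve hε hS₀, fun S₀ hS₀ _ => ?_⟩
  have tangent_ne_zero :
      (1, 0, -ε * C₂ * S₀ / Real.sqrt (1 - C₂ * S₀ ^ 2), 0) ≠ (0 : ℝ × ℝ × ℝ × ℝ) := by
    simp [Prod.ext_iff]
  exact hasEigenvector_fderiv_zero_of_tangent (γ := extremeTiltCurve C₂ ε)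
    differentiable_Fets.differentiableAt (hasDerivAt_extremeTiltCurve hS₀)
    (eventually_Fets_extremeTiltCurve hε hS₀) tangent_ne_zero

/-- The curve `Q(Σ₀) = (Σ₀, 0, ε√(1 - C₂Σ₀²), 0)` (for `C₂Σ₀² ≤ 1`) consists of
equilibria of the extreme-tilt scalar-field system, and (for `C₂Σ₀² < 1`,
`Σ₀ ≠ 0`) the Jacobian at `Q(Σ₀)` has eigenvalue `0` with eigenvector the tangent
vector `(1, 0, -εC₂Σ₀/√(1 - C₂Σ₀²), 0)` of the curve; hence the curve is normally
hyperbolic at such points. -/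
theorem extreme_tilt_curve_normally_hyperbolic (C₂ lam ε : ℝ)
    (hε : ε = 1 ∨ ε = -1) (hC : 0 < C₂) (hlam : 0 < lam) :
    (∀ S₀ : ℝ, C₂ * S₀ ^ 2 ≤ 1 →
      Fets C₂ lam ε (S₀, 0, ε * Real.sqrt (1 - C₂ * S₀ ^ 2), 0) = 0) ∧
    (∀ S₀ : ℝ, C₂ * S₀ ^ 2 < 1 → S₀ ≠ 0 →
      Module.End.HasEigenvector
        ((fderiv ℝ (Fets C₂ lam ε)
            (S₀, 0, ε * Real.sqrt (1 - C₂ * S₀ ^ 2), 0)).toLinearMap) 0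
        (1, 0, -ε * C₂ * S₀ / Real.sqrt (1 - C₂ * S₀ ^ 2), 0)) :=
  extreme_tilt_curve_normally_hyperbolic_general C₂ lam ε hε
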